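/- Let x₁,…,x_m and x̃₁,…,x̃_m be vectors in ℝ^d such that for every i, every coordinate of x̃_i differs from the corresponding coordinate of x_i by at most δ ≥ 0 (i.e., ‖x̃_i − x_i‖_∞ ≤ δ), and ‖x_i‖₂ ≤ R for every i. Then ‖ Σ_{i=1}^m x̃_i x̃_iᵀ − Σ_{i=1}^m x_i x_iᵀ ‖_F ≤ m·(2√d·δ·R + d·δ²), where ‖·‖_F is the Frobenius norm. -/

import Mathlib

/-!
With `e = x̃ - x` one has `x̃ x̃ᵀ - x xᵀ = e xᵀ + x eᵀ + e eᵀ`, and writing `u vᵀ` as a column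
times a row, submultiplicativity of the Frobenius norm gives `‖u vᵀ‖_F ≤ ‖u‖₂ ‖v‖₂`. Since
`‖e‖₂ ≤ √d δ`, each summand is at most `2 √d δ R + d δ²`; the triangle inequality over the
`m` samples finishes the proof.
-/

open Matrix
open scoped Matrix.Norms.Frobenius

namespace Matrix

theorem frobenius_norm_eq_sqrt {m n : Type*} [Fintype m] [Fintype n] (A : Matrix m n ℝ) :
    ‖A‖ = √(∑ i, ∑ j, A i j ^ 2) := by
  simp only [frobenius_norm_def, Real.sqrt_eq_rpow, Real.rpow_two, Real.norm_eq_abs, sq_abs]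

theorem frobenius_norm_vecMulVec_le {𝕜 m n : Type*} [RCLike 𝕜] [Fintype m] [Fintype n]
    (u : m → 𝕜) (v : n → 𝕜) :
    ‖vecMulVec u v‖ ≤ ‖WithLp.toLp 2 u‖ * ‖WithLp.toLp 2 v‖ := by
  rw [vecMulVec_eq Unit, ← frobenius_norm_replicateCol (ι := Unit) u,
    ← frobenius_norm_replicateRow (ι := Unit) v]
  exact frobenius_norm_mul _ _

theorem frobenius_norm_vecMulVec_self_sub_le {𝕜 n : Type*} [RCLike 𝕜] [Fintype n]
    (x y : EuclideanSpace 𝕜 n) :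
    ‖vecMulVec y y - vecMulVec x x‖ ≤ 2 * ‖x‖ * ‖y - x‖ + ‖y - x‖ ^ 2 := by
  set e := y - x
  have hy : y = x + e := by simp [e]
  have hdecomp : vecMulVec y y - vecMulVec x x =
      vecMulVec e x + vecMulVec x e + vecMulVec e e := by
    ext a b
    simp only [hy, sub_apply, add_apply, vecMulVec_apply, PiLp.add_apply]
    ring
  have hnorm (u v : EuclideanSpace 𝕜 n) : ‖vecMulVec u v‖ ≤ ‖u‖ * ‖v‖ := by
    simpa using frobenius_norm_vecMulVec_le u.ofLp v.ofLp
  calc ‖vecMulVec y y - vecMulVec x x‖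
      ≤ ‖vecMulVec e x‖ + ‖vecMulVec x e‖ + ‖vecMulVec e e‖ := hdecomp ▸ norm_add₃_le
    _ ≤ ‖e‖ * ‖x‖ + ‖x‖ * ‖e‖ + ‖e‖ * ‖e‖ := by gcongr <;> apply hnorm
    _ = 2 * ‖x‖ * ‖e‖ + ‖e‖ ^ 2 := by ring

end Matrix

theorem EuclideanSpace.norm_le_sqrt_card_mul {ι : Type*} [Fintype ι] {v : EuclideanSpace ℝ ι}
    {δ : ℝ} (hδ : 0 ≤ δ) (h : ∀ a, |v a| ≤ δ) : ‖v‖ ≤ √(Fintype.card ι) * δ := by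
  rw [EuclideanSpace.norm_eq, ← Real.sqrt_sq hδ, ← Real.sqrt_mul (Nat.cast_nonneg _)]
  refine Real.sqrt_le_sqrt ?_
  calc ∑ a, ‖v a‖ ^ 2 ≤ ∑ _a : ι, δ ^ 2 :=
        Finset.sum_le_sum fun a _ => pow_le_pow_left₀ (norm_nonneg _) (h a) 2
    _ = Fintype.card ι * δ ^ 2 := by simp

/-- Perturbation bound for the second-moment matrix under entrywise `δ`-rounding of the
samples: `‖ Σ x̃_i x̃_iᵀ − Σ x_i x_iᵀ ‖_F ≤ m (2 √d δ R + d δ²)`. -/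
theorem second_moment_rounding_bound (m d : ℕ) (δ R : ℝ) (hδ : 0 ≤ δ)
    (x xt : Fin m → EuclideanSpace ℝ (Fin d))
    (hclose : ∀ i a, |xt i a - x i a| ≤ δ)
    (hnorm : ∀ i, ‖x i‖ ≤ R) :
    Real.sqrt (∑ a : Fin d, ∑ b : Fin d,
        ((∑ i, xt i a * xt i b) - (∑ i, x i a * x i b)) ^ 2)
      ≤ m * (2 * Real.sqrt d * δ * R + d * δ ^ 2) := by
  have hround (i : Fin m) : ‖xt i - x i‖ ≤ √d * δ := by
    simpa using
      EuclideanSpace.norm_le_sqrt_card_mul (v := xt i - x i) hδ (by simpa using hclose i)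
  have hterm (i : Fin m) :
      ‖vecMulVec (xt i) (xt i) - vecMulVec (x i) (x i)‖ ≤ 2 * √d * δ * R + d * δ ^ 2 := by
    calc _ ≤ 2 * ‖x i‖ * ‖xt i - x i‖ + ‖xt i - x i‖ ^ 2 :=
          frobenius_norm_vecMulVec_self_sub_le (x i) (xt i)
      _ ≤ 2 * R * (√d * δ) + (√d * δ) ^ 2 := by
          have hR : 0 ≤ R := (norm_nonneg _).trans (hnorm i)
          gcongr
          exacts [hnorm i, hround i, hround i]
      _ = 2 * √d * δ * R + d * δ ^ 2 := by rw [mul_pow, Real.sq_sqrt d.cast_nonneg]; ring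
  calc _ = ‖∑ i, (vecMulVec (xt i) (xt i) - vecMulVec (x i) (x i))‖ := by
        simp [frobenius_norm_eq_sqrt, Matrix.sum_apply, vecMulVec_apply, Finset.sum_sub_distrib]
    _ ≤ ∑ i, ‖vecMulVec (xt i) (xt i) - vecMulVec (x i) (x i)‖ := norm_sum_le _ _
    _ ≤ ∑ _i : Fin m, (2 * √d * δ * R + d * δ ^ 2) := Finset.sum_le_sum fun i _ => hterm i
    _ = m * (2 * √d * δ * R + d * δ ^ 2) := by
        rw [Finset.sum_const, Finset.card_univ, Fintype.card_fin, nsmul_eq_mul]
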